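/- Let C be an n × n complex matrix such that 1 − Cᴴ C is positive semidefinite (hence 1 − C Cᴴ is also positive semidefinite). Let W be the 2n × 2n block matrix W = fromBlocks C ((1 − C Cᴴ)^{1/2}) ((1 − Cᴴ C)^{1/2}) (−Cᴴ), i.e., W = [[C, (1 − C Cᴴ)^{1/2}], [(1 − Cᴴ C)^{1/2}, −Cᴴ]]. Then W is unitary: Wᴴ * W = 1 and W * Wᴴ = 1. -/

import Mathlib

/-! Both products have diagonal blocks `Cᴴ C + (1 - Cᴴ C) = 1` and `C Cᴴ + (1 - C Cᴴ) = 1`. The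
off-diagonal blocks vanish because `C` intertwines the defect matrices,
`C (1 - Cᴴ C) = (1 - C Cᴴ) C`, and therefore their square roots: a matrix has finite spectrum,
so the square root of either defect is one and the same interpolating polynomial evaluated at it. -/

open Matrix
open scoped ComplexOrder

namespace Matrix.PosSemidef

/-- The positive semidefinite square root of a positive semidefinite matrix
(the definition Mathlib had in December 2024, since removed). -/
noncomputable def sqrt {n : Type*} [Fintype n] [DecidableEq n] {𝕜 : Type*} [RCLike 𝕜]
    {A : Matrix n n 𝕜} (hA : A.PosSemidef) : Matrix n n 𝕜 :=
  hA.1.eigenvectorUnitary.1 * diagonal ((↑) ∘ (√·) ∘ hA.1.eigenvalues) *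
  (star hA.1.eigenvectorUnitary : Matrix n n 𝕜)

end Matrix.PosSemidef

open Polynomial
open scoped MatrixOrder

theorem SemiconjBy.aeval {R A : Type*} [CommSemiring R] [Semiring A] [Algebra R A] {x a b : A}
    (h : SemiconjBy x a b) (q : R[X]) : SemiconjBy x (aeval a q) (aeval b q) := by
  induction q using Polynomial.induction_on' with
  | add q r hq hr => simpa only [map_add] using hq.add_right hr
  | monomial k r =>
    simpa only [aeval_monomial] using
      SemiconjBy.mul_right (Algebra.commute_algebraMap_right r x) (h.pow_right k)

section FiniteSpectrum

variable {R A : Type*} {p : A → Prop} [Field R] [StarRing R] [MetricSpace R]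
  [IsTopologicalRing R] [ContinuousStar R] [TopologicalSpace A] [Ring A] [StarRing A]
  [Algebra R A] [ContinuousFunctionalCalculus R A p]

theorem SemiconjBy.cfc_of_finite_spectrum {x a b : A} (h : SemiconjBy x a b)
    (ha : (spectrum R a).Finite) (hb : (spectrum R b).Finite) (hpa : p a) (hpb : p b)
    (f : R → R) : SemiconjBy x (cfc f a) (cfc f b) := by
  classical
  set s := (ha.union hb).toFinset
  set q := Lagrange.interpolate s id f
  have hcfc : ∀ c, p c → spectrum R c ⊆ s → cfc f c = Polynomial.aeval c q := by
    intro c hc hcs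
    rw [← cfc_polynomial q c hc]
    exact cfc_congr fun y hy =>
      (Lagrange.eval_interpolate_at_node f Function.injective_id.injOn (hcs hy)).symm
  rw [hcfc a hpa (by simp [s]), hcfc b hpb (by simp [s])]
  exact h.aeval q

end FiniteSpectrum

namespace Matrix.PosSemidef

variable {n 𝕜 : Type*} [Fintype n] [DecidableEq n] [RCLike 𝕜] {A : Matrix n n 𝕜}

theorem sqrt_eq_cfcSqrt (hA : A.PosSemidef) : hA.sqrt = CFC.sqrt A := by
  rw [CFC.sqrt_eq_real_sqrt A hA.nonneg, cfcₙ_eq_cfc, hA.1.cfc_eq]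
  rfl

theorem sqrt_mul_self (hA : A.PosSemidef) : hA.sqrt * hA.sqrt = A := by
  rw [sqrt_eq_cfcSqrt]
  exact CFC.sqrt_mul_sqrt_self A hA.nonneg

theorem isHermitian_sqrt (hA : A.PosSemidef) : hA.sqrt.IsHermitian := by
  rw [sqrt_eq_cfcSqrt]
  exact (CFC.sqrt_nonneg A).isSelfAdjoint.isHermitian

theorem semiconjBy_sqrt {B X : Matrix n n 𝕜} (hA : A.PosSemidef) (hB : B.PosSemidef)
    (h : SemiconjBy X A B) : SemiconjBy X hA.sqrt hB.sqrt := by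
  rw [sqrt_eq_cfcSqrt, sqrt_eq_cfcSqrt, CFC.sqrt_eq_real_sqrt A hA.nonneg,
    CFC.sqrt_eq_real_sqrt B hB.nonneg, cfcₙ_eq_cfc, cfcₙ_eq_cfc]
  exact h.cfc_of_finite_spectrum finite_real_spectrum finite_real_spectrum
    hA.1.isSelfAdjoint hB.1.isSelfAdjoint _

end Matrix.PosSemidef

namespace Matrix

variable {m n α : Type*} [Fintype m] [Fintype n] [DecidableEq m] [DecidableEq n] [Ring α]
  [StarRing α] {C : Matrix m n α} {S : Matrix n n α} {T : Matrix m m α}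

theorem conjTranspose_fromBlocks_mul_fromBlocks_eq_one (hS : Sᴴ = S) (hT : Tᴴ = T)
    (hS2 : S * S = 1 - Cᴴ * C) (hT2 : T * T = 1 - C * Cᴴ) (hCS : C * S = T * C) :
    (fromBlocks C T S (-Cᴴ))ᴴ * fromBlocks C T S (-Cᴴ) = 1 := by
  have hSC : S * Cᴴ = Cᴴ * T := by
    simpa only [conjTranspose_mul, hS, hT] using congrArg conjTranspose hCS
  rw [fromBlocks_conjTranspose, hS, hT, conjTranspose_neg, conjTranspose_conjTranspose,
    fromBlocks_multiply, ← fromBlocks_one]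
  congr 1
  · rw [hS2, add_sub_cancel]
  · rw [Matrix.mul_neg, hSC, add_neg_cancel]
  · rw [Matrix.neg_mul, hCS, add_neg_cancel]
  · rw [hT2, Matrix.neg_mul, Matrix.mul_neg, neg_neg, sub_add_cancel]

theorem fromBlocks_mul_conjTranspose_fromBlocks_eq_one (hS : Sᴴ = S) (hT : Tᴴ = T)
    (hS2 : S * S = 1 - Cᴴ * C) (hT2 : T * T = 1 - C * Cᴴ) (hCS : C * S = T * C) :
    fromBlocks C T S (-Cᴴ) * (fromBlocks C T S (-Cᴴ))ᴴ = 1 := by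
  have hW : (fromBlocks C T S (-Cᴴ))ᴴ = fromBlocks Cᴴ S T (-Cᴴᴴ) := by
    rw [fromBlocks_conjTranspose, hS, hT, conjTranspose_neg]
  have hTC : Cᴴ * T = S * Cᴴ := by
    simpa only [conjTranspose_mul, hS, hT] using congrArg conjTranspose hCS.symm
  calc fromBlocks C T S (-Cᴴ) * (fromBlocks C T S (-Cᴴ))ᴴ
      = (fromBlocks C T S (-Cᴴ))ᴴᴴ * (fromBlocks C T S (-Cᴴ))ᴴ := by
        rw [conjTranspose_conjTranspose]
    _ = 1 := by
      rw [hW]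
      refine conjTranspose_fromBlocks_mul_fromBlocks_eq_one hT hS ?_ ?_ hTC <;>
        rwa [conjTranspose_conjTranspose]

end Matrix

/-- If `1 - Cᴴ C` (hence also `1 - C Cᴴ`) is positive semidefinite, then the
block matrix `W = [[C, (1 - C Cᴴ)^{1/2}], [(1 - Cᴴ C)^{1/2}, -Cᴴ]]` is unitary:
`Wᴴ W = 1` and `W Wᴴ = 1`. -/
theorem fromBlocks_unitary (n : ℕ) (C : Matrix (Fin n) (Fin n) ℂ)
    (h₁ : (1 - Cᴴ * C).PosSemidef) (h₂ : (1 - C * Cᴴ).PosSemidef)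
    (W : Matrix (Fin n ⊕ Fin n) (Fin n ⊕ Fin n) ℂ)
    (hW : W = Matrix.fromBlocks C h₂.sqrt h₁.sqrt (-Cᴴ)) :
    Wᴴ * W = 1 ∧ W * Wᴴ = 1 := by
  have hCS : C * h₁.sqrt = h₂.sqrt * C := h₁.semiconjBy_sqrt h₂ <| by
    simp only [SemiconjBy, mul_sub, sub_mul, mul_one, one_mul, mul_assoc]
  subst hW
  exact ⟨conjTranspose_fromBlocks_mul_fromBlocks_eq_one h₁.isHermitian_sqrt h₂.isHermitian_sqrt
      h₁.sqrt_mul_self h₂.sqrt_mul_self hCS,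
    fromBlocks_mul_conjTranspose_fromBlocks_eq_one h₁.isHermitian_sqrt h₂.isHermitian_sqrt
      h₁.sqrt_mul_self h₂.sqrt_mul_self hCS⟩
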